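/- arXiv:2408.00812 — 6 statements merged into one kernel-verified Lean document; each statement's English description precedes it below -/
import Mathlib

section
/- In the graph G defined below, every automorphism fixes the vertices t'' and t', and fixes t_n for every natural number n. -/
theorem stmt3 {V : Type} (A : ℕ → Set V) (t : ℕ → V) (t' t'' : V)
    (hdisj : Pairwise (fun m n => Disjoint (A m) (A n)))
    (hfin : ∀ n, (A n).Finite) (hne : ∀ n, (A n).Nonempty)
    (htinj : Function.Injective t)
    (htA : ∀ n m, t n ∉ A m) (ht'A : ∀ m, t' ∉ A m) (ht''A : ∀ m, t'' ∉ A m)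
    (ht' : ∀ n, t' ≠ t n) (ht'' : ∀ n, t'' ≠ t n) (h12 : t' ≠ t'')
    (hcover : ∀ v : V, (∃ n, v ∈ A n) ∨ (∃ n, v = t n) ∨ v = t' ∨ v = t'')
    (G : SimpleGraph V)
    (hG : G = SimpleGraph.fromRel (fun a b =>
      (a = t'' ∧ b = t') ∨ (a = t' ∧ b = t 0) ∨
      (∃ n, a = t n ∧ b = t (n + 1)) ∨ (∃ n, a = t n ∧ b ∈ A n))) :
    ∀ φ : G ≃g G, φ t' = t' ∧ φ t'' = t'' ∧ ∀ n, φ (t n) = t n := by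
  subst hG
  set R : V → V → Prop := fun a b =>
      (a = t'' ∧ b = t') ∨ (a = t' ∧ b = t 0) ∨
      (∃ n, a = t n ∧ b = t (n + 1)) ∨ (∃ n, a = t n ∧ b ∈ A n) with hR
  have hadj : ∀ a b, (SimpleGraph.fromRel R).Adj a b ↔ a ≠ b ∧ (R a b ∨ R b a) := by
    intro a b; exact SimpleGraph.fromRel_adj R a b
  -- neighborhood of t''
  have nbt'' : ∀ v, (SimpleGraph.fromRel R).Adj t'' v ↔ v = t' := by
    intro v
    rw [hadj]
    constructor
    · rintro ⟨hne1, h | h⟩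
      · rcases h with ⟨_, h⟩ | ⟨h, _⟩ | ⟨n, h, _⟩ | ⟨n, h, _⟩
        · exact h
        · exact absurd h.symm h12
        · exact absurd h (ht'' n)
        · exact absurd h (ht'' n)
      · rcases h with ⟨_, h⟩ | ⟨_, h⟩ | ⟨n, _, h⟩ | ⟨n, _, h⟩
        · exact absurd h.symm h12
        · exact absurd h (ht'' 0)
        · exact absurd h (ht'' (n+1))
        · exact absurd h (ht''A n)
    · intro hv
      exact ⟨fun h => h12 (h.trans hv).symm, Or.inl (Or.inl ⟨rfl, hv⟩)⟩
  -- neighborhood of t'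
  have nbt' : ∀ v, (SimpleGraph.fromRel R).Adj t' v ↔ (v = t'' ∨ v = t 0) := by
    intro v
    rw [hadj]
    constructor
    · rintro ⟨hne1, h | h⟩
      · rcases h with ⟨h, _⟩ | ⟨_, h⟩ | ⟨n, h, _⟩ | ⟨n, h, _⟩
        · exact absurd h h12
        · exact Or.inr h
        · exact absurd h (ht' n)
        · exact absurd h (ht' n)
      · rcases h with ⟨h, _⟩ | ⟨_, h⟩ | ⟨n, _, h⟩ | ⟨n, _, h⟩
        · exact Or.inl h
        · exact absurd h (ht' 0)
        · exact absurd h (ht' (n+1))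
        · exact absurd h (ht'A n)
    · rintro (hv | hv)
      · exact ⟨fun h => h12 (h.trans hv), Or.inr (Or.inl ⟨hv, rfl⟩)⟩
      · exact ⟨fun h => ht' 0 (h.trans hv), Or.inl (Or.inr (Or.inl ⟨rfl, hv⟩))⟩
  -- neighborhood of an element of A n
  have nbA : ∀ n a, a ∈ A n → ∀ v, (SimpleGraph.fromRel R).Adj a v ↔ v = t n := by
    intro n a ha v
    rw [hadj]
    constructor
    · rintro ⟨hne1, h | h⟩
      · rcases h with ⟨h, _⟩ | ⟨h, _⟩ | ⟨m, h, _⟩ | ⟨m, h, _⟩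
        · exact absurd (h ▸ ha) (ht''A n)
        · exact absurd (h ▸ ha) (ht'A n)
        · exact absurd (h ▸ ha) (htA m n)
        · exact absurd (h ▸ ha) (htA m n)
      · rcases h with ⟨_, h⟩ | ⟨_, h⟩ | ⟨m, _, h⟩ | ⟨m, hv, h⟩
        · exact absurd (h ▸ ha) (ht'A n)
        · exact absurd (h ▸ ha) (htA 0 n)
        · exact absurd (h ▸ ha) (htA (m+1) n)
        · have hmn : m = n := by
            by_contra hne2
            exact Set.disjoint_left.mp (hdisj hne2) h ha
          exact hv.trans (by rw [hmn])
    · intro hv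
      exact ⟨fun h => htA n n ((h.trans hv) ▸ ha),
        Or.inr (Or.inr (Or.inr (Or.inr ⟨n, hv, ha⟩)))⟩
  -- neighborhood of t n
  have nbt : ∀ n v, (SimpleGraph.fromRel R).Adj (t n) v ↔
      ((n = 0 ∧ v = t') ∨ (∃ m, n = m + 1 ∧ v = t m) ∨ v = t (n+1) ∨ v ∈ A n) := by
    intro n v
    rw [hadj]
    constructor
    · rintro ⟨hne1, h | h⟩
      · rcases h with ⟨h, _⟩ | ⟨h, _⟩ | ⟨m, h, hv⟩ | ⟨m, h, hv⟩
        · exact absurd h.symm (ht'' n)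
        · exact absurd h.symm (ht' n)
        · have := htinj h; subst this; exact Or.inr (Or.inr (Or.inl hv))
        · have := htinj h; subst this; exact Or.inr (Or.inr (Or.inr hv))
      · rcases h with ⟨hv, h⟩ | ⟨hv, h⟩ | ⟨m, hv, h⟩ | ⟨m, hv, h⟩
        · exact absurd h.symm (ht' n)
        · have := htinj h.symm; exact Or.inl ⟨this.symm, hv⟩
        · exact Or.inr (Or.inl ⟨m, htinj h, hv⟩)
        · exact absurd h (htA n m)
    · rintro (⟨hn0, hv⟩ | ⟨m, hnm, hv⟩ | hv | hv)
      · exact ⟨fun h => ht' n (h.trans hv).symm,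
          Or.inr (Or.inr (Or.inl ⟨hv, by rw [hn0]⟩))⟩
      · refine ⟨fun h => ?_, Or.inr (Or.inr (Or.inr (Or.inl ⟨m, hv, by rw [hnm]⟩)))⟩
        · have := htinj (h.trans hv); omega
      · refine ⟨fun h => ?_, Or.inl (Or.inr (Or.inr (Or.inl ⟨n, rfl, hv⟩)))⟩
        · have := htinj (h.trans hv); omega
      · exact ⟨fun h => htA n n (by rwa [h]),
          Or.inl (Or.inr (Or.inr (Or.inr ⟨n, rfl, hv⟩)))⟩
  -- "big": at least three neighbors
  set Big : V → Prop := fun v => ∃ a b c, a ≠ b ∧ a ≠ c ∧ b ≠ c ∧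
      (SimpleGraph.fromRel R).Adj v a ∧ (SimpleGraph.fromRel R).Adj v b ∧
      (SimpleGraph.fromRel R).Adj v c with hBig
  have bigT : ∀ n, Big (t n) := by
    intro n
    obtain ⟨a, ha⟩ := hne n
    match n with
    | 0 =>
      refine ⟨t', t 1, a, ht' 1, fun h => ht'A 0 (h ▸ ha), fun h => htA 1 0 (h ▸ ha),
        ?_, ?_, ?_⟩
      · rw [nbt]; exact Or.inl ⟨rfl, rfl⟩
      · rw [nbt]; exact Or.inr (Or.inr (Or.inl rfl))
      · rw [nbt]; exact Or.inr (Or.inr (Or.inr ha))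
    | (m+1) =>
      refine ⟨t m, t (m+2), a, fun h => by have := htinj h; omega,
        fun h => htA m (m+1) (h ▸ ha), fun h => htA (m+2) (m+1) (h ▸ ha), ?_, ?_, ?_⟩
      · rw [nbt]; exact Or.inr (Or.inl ⟨m, rfl, rfl⟩)
      · rw [nbt]; exact Or.inr (Or.inr (Or.inl rfl))
      · rw [nbt]; exact Or.inr (Or.inr (Or.inr ha))
  have notBigT' : ¬ Big t' := by
    rintro ⟨a, b, c, hab, hac, hbc, ha, hb, hc⟩
    rw [nbt'] at ha hb hc
    rcases ha with rfl | rfl <;> rcases hb with rfl | rfl <;> rcases hc with rfl | rfl <;>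
      simp_all
  have notBigA : ∀ n a, a ∈ A n → ¬ Big a := by
    rintro n x hx ⟨a, b, c, hab, hac, hbc, ha, hb, hc⟩
    rw [nbA n x hx] at ha hb
    exact hab (ha.trans hb.symm)
  have notBigT'' : ¬ Big t'' := by
    rintro ⟨a, b, c, hab, hac, hbc, ha, hb, hc⟩
    rw [nbt''] at ha hb
    exact hab (ha.trans hb.symm)
  -- Spec: characterization of t''
  set Spec : V → Prop := fun v => ∃ w, (SimpleGraph.fromRel R).Adj v w ∧
      (∀ u, (SimpleGraph.fromRel R).Adj v u → u = w) ∧ ¬ Big w with hSpec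
  have spect'' : Spec t'' := by
    refine ⟨t', by rw [nbt''], fun u hu => by rwa [nbt''] at hu, notBigT'⟩
  have specOnly : ∀ v, Spec v → v = t'' := by
    rintro v ⟨w, hw, huniq, hnb⟩
    rcases hcover v with ⟨n, hv⟩ | ⟨n, rfl⟩ | rfl | rfl
    · exfalso
      have := (nbA n v hv w).mp hw
      exact hnb (this ▸ bigT n)
    · exfalso
      obtain ⟨a, b, c, hab, _, _, ha, hb, _⟩ := bigT n
      exact hab ((huniq a ha).trans (huniq b hb).symm)
    · exfalso
      have h1 : t'' = w := huniq t'' ((nbt' t'').mpr (Or.inl rfl))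
      have h2 : t 0 = w := huniq (t 0) ((nbt' (t 0)).mpr (Or.inr rfl))
      exact ht'' 0 (h1.trans h2.symm)
    · rfl
  -- transport along an automorphism
  intro φ
  have adjmap : ∀ (ψ : (SimpleGraph.fromRel R) ≃g (SimpleGraph.fromRel R)) a b,
      (SimpleGraph.fromRel R).Adj (ψ a) (ψ b) ↔ (SimpleGraph.fromRel R).Adj a b :=
    fun ψ a b => ψ.map_adj_iff
  have bigMap : ∀ (ψ : (SimpleGraph.fromRel R) ≃g (SimpleGraph.fromRel R)) v,
      Big v → Big (ψ v) := by
    rintro ψ v ⟨a, b, c, hab, hac, hbc, ha, hb, hc⟩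
    exact ⟨ψ a, ψ b, ψ c, fun h => hab (ψ.injective h), fun h => hac (ψ.injective h),
      fun h => hbc (ψ.injective h), (adjmap ψ v a).mpr ha, (adjmap ψ v b).mpr hb,
      (adjmap ψ v c).mpr hc⟩
  have specMap : ∀ v, Spec v → Spec (φ v) := by
    rintro v ⟨w, hw, huniq, hnb⟩
    refine ⟨φ w, (adjmap φ v w).mpr hw, fun u hu => ?_, fun hb => ?_⟩
    · have : (SimpleGraph.fromRel R).Adj (φ v) (φ (φ.symm u)) := by
        rwa [RelIso.apply_symm_apply]
      have := huniq (φ.symm u) ((adjmap φ v (φ.symm u)).mp this)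
      rw [← this, RelIso.apply_symm_apply]
    · apply hnb
      have := bigMap φ.symm (φ w) hb
      rwa [RelIso.symm_apply_apply] at this
  -- φ fixes t''
  have fix'' : φ t'' = t'' := specOnly _ (specMap t'' spect'')
  -- φ fixes t'
  have fix' : φ t' = t' := by
    have : (SimpleGraph.fromRel R).Adj t'' (φ t') := by
      rw [← fix'']; exact (adjmap φ t'' t').mpr ((nbt'' t').mpr rfl)
    exact (nbt'' (φ t')).mp this
  -- φ fixes t 0
  have fix0 : φ (t 0) = t 0 := by
    have hadj0 : (SimpleGraph.fromRel R).Adj t' (φ (t 0)) := by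
      rw [← fix']; exact (adjmap φ t' (t 0)).mpr ((nbt' (t 0)).mpr (Or.inr rfl))
    rcases (nbt' (φ (t 0))).mp hadj0 with h | h
    · exfalso
      rw [← fix''] at h
      exact ht'' 0 (φ.injective h).symm
    · exact h
  -- φ fixes all t n, by induction
  have key : ∀ n, φ (t n) = t n := by
    have step : ∀ n, φ (t n) = t n → (∀ m, n = m + 1 → φ (t m) = t m) →
        φ (t (n+1)) = t (n+1) := by
      intro n hn hprev
      have hbig : Big (φ (t (n+1))) := bigMap φ _ (bigT (n+1))
      have hadjn : (SimpleGraph.fromRel R).Adj (t n) (φ (t (n+1))) := by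
        rw [← hn]
        exact (adjmap φ (t n) (t (n+1))).mpr ((nbt n (t (n+1))).mpr
          (Or.inr (Or.inr (Or.inl rfl))))
      rcases (nbt n (φ (t (n+1)))).mp hadjn with ⟨_, h⟩ | ⟨m, hm, h⟩ | h | h
      · exact absurd (h ▸ hbig) notBigT'
      · exfalso
        rw [← hprev m hm] at h
        have := htinj (φ.injective h)
        omega
      · exact h
      · exact absurd (notBigA n _ h) (fun hh => hh hbig)
    have pair : ∀ n, φ (t n) = t n ∧ φ (t (n+1)) = t (n+1) := by
      intro n
      induction n with
      | zero => exact ⟨fix0, step 0 fix0 (fun m hm => by omega)⟩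
      | succ m ih =>
        refine ⟨ih.2, step (m+1) ih.2 (fun k hk => ?_)⟩
        have : k = m := by omega
        subst this
        exact ih.1
    exact fun n => (pair n).1
  exact ⟨fix', fix'', key⟩
end

section
/- In the graph G defined below, for every natural number p and every x ∈ A_p, the orbit of x under the automorphism group of G is exactly A_p; in particular every automorphism maps A_p onto A_p. -/
theorem stmt4 {V : Type} (A : ℕ → Set V) (t : ℕ → V) (t' t'' : V)
    (hdisj : Pairwise (fun m n => Disjoint (A m) (A n)))
    (hfin : ∀ n, (A n).Finite) (hne : ∀ n, (A n).Nonempty)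
    (htinj : Function.Injective t)
    (htA : ∀ n m, t n ∉ A m) (ht'A : ∀ m, t' ∉ A m) (ht''A : ∀ m, t'' ∉ A m)
    (ht' : ∀ n, t' ≠ t n) (ht'' : ∀ n, t'' ≠ t n) (h12 : t' ≠ t'')
    (hcover : ∀ v : V, (∃ n, v ∈ A n) ∨ (∃ n, v = t n) ∨ v = t' ∨ v = t'')
    (G : SimpleGraph V)
    (hG : G = SimpleGraph.fromRel (fun a b =>
      (a = t'' ∧ b = t') ∨ (a = t' ∧ b = t 0) ∨
      (∃ n, a = t n ∧ b = t (n + 1)) ∨ (∃ n, a = t n ∧ b ∈ A n))) :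
    ∀ (p : ℕ) (x : V), x ∈ A p →
      {y : V | ∃ φ : G ≃g G, φ x = y} = A p := by
  classical
  -- uniqueness of the index of a set containing a given element
  have hAuniq : ∀ {a : V} {m n : ℕ}, a ∈ A m → a ∈ A n → m = n := by
    intro a m n hm hn
    by_contra h
    exact Set.disjoint_left.mp (hdisj h) hm hn
  have hadj : ∀ a b : V, G.Adj a b ↔ a ≠ b ∧
      (((a = t'' ∧ b = t') ∨ (a = t' ∧ b = t 0) ∨
      (∃ n, a = t n ∧ b = t (n + 1)) ∨ (∃ n, a = t n ∧ b ∈ A n)) ∨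
      ((b = t'' ∧ a = t') ∨ (b = t' ∧ a = t 0) ∨
      (∃ n, b = t n ∧ a = t (n + 1)) ∨ (∃ n, b = t n ∧ a ∈ A n))) := by
    intro a b
    rw [hG]
    exact SimpleGraph.fromRel_adj _ a b
  -- Neighborhoods
  have N1 : ∀ b, G.Adj t'' b ↔ b = t' := by
    intro b
    rw [hadj]
    constructor
    · rintro ⟨hne0, h⟩
      rcases h with (⟨_, h⟩ | ⟨h, _⟩ | ⟨n, h, _⟩ | ⟨n, h, _⟩) | (⟨_, h⟩ | ⟨_, h⟩ | ⟨n, _, h⟩ | ⟨n, _, h⟩)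
      · exact h
      · exact absurd h.symm h12
      · exact absurd h (ht'' n)
      · exact absurd h (ht'' n)
      · exact absurd h.symm h12
      · exact absurd h (ht'' 0)
      · exact absurd h (ht'' (n+1))
      · exact absurd h (ht''A n)
    · rintro rfl
      exact ⟨fun h => h12 h.symm, Or.inl (Or.inl ⟨rfl, rfl⟩)⟩
  have N2 : ∀ b, G.Adj t' b ↔ b = t'' ∨ b = t 0 := by
    intro b
    rw [hadj]
    constructor
    · rintro ⟨hne0, h⟩
      rcases h with (⟨h, _⟩ | ⟨_, h⟩ | ⟨n, h, _⟩ | ⟨n, h, _⟩) | (⟨h, _⟩ | ⟨_, h⟩ | ⟨n, _, h⟩ | ⟨n, _, h⟩)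
      · exact absurd h h12
      · exact Or.inr h
      · exact absurd h (ht' n)
      · exact absurd h (ht' n)
      · exact Or.inl h
      · exact absurd h (ht' 0)
      · exact absurd h (ht' (n+1))
      · exact absurd h (ht'A n)
    · rintro (rfl | rfl)
      · exact ⟨h12, Or.inr (Or.inl ⟨rfl, rfl⟩)⟩
      · exact ⟨ht' 0, Or.inl (Or.inr (Or.inl ⟨rfl, rfl⟩))⟩
  have N3 : ∀ (n : ℕ) (a : V), a ∈ A n → ∀ b, G.Adj a b ↔ b = t n := by
    intro n a ha b
    rw [hadj]
    constructor
    · rintro ⟨hne0, h⟩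
      rcases h with (⟨h, _⟩ | ⟨h, _⟩ | ⟨m, h, _⟩ | ⟨m, h, _⟩) | (⟨_, h⟩ | ⟨_, h⟩ | ⟨m, hb, h⟩ | ⟨m, hb, h⟩)
      · exact absurd ha (h ▸ ht''A n)
      · exact absurd ha (h ▸ ht'A n)
      · exact absurd ha (h ▸ htA m n)
      · exact absurd ha (h ▸ htA m n)
      · exact absurd ha (h ▸ ht'A n)
      · exact absurd ha (h ▸ htA 0 n)
      · exact absurd ha (h ▸ htA (m+1) n)
      · rw [hb, hAuniq h ha]
    · rintro rfl
      exact ⟨fun h => htA n n (h ▸ ha), Or.inr (Or.inr (Or.inr (Or.inr ⟨n, rfl, ha⟩)))⟩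
  have N4 : ∀ (n : ℕ) (b : V), G.Adj (t n) b ↔
      b = t (n+1) ∨ (∃ m, n = m + 1 ∧ b = t m) ∨ (n = 0 ∧ b = t') ∨ b ∈ A n := by
    intro n b
    rw [hadj]
    constructor
    · rintro ⟨hne0, h⟩
      rcases h with (⟨h, _⟩ | ⟨h, _⟩ | ⟨m, h, hb⟩ | ⟨m, h, hb⟩) | (⟨_, h⟩ | ⟨hb, h⟩ | ⟨m, hb, h⟩ | ⟨m, hb, h⟩)
      · exact absurd h.symm (ht'' n)
      · exact absurd h.symm (ht' n)
      · exact Or.inl (by rw [hb, htinj h])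
      · exact Or.inr (Or.inr (Or.inr (by rw [← htinj h] at hb; exact hb)))
      · exact absurd h.symm (ht' n)
      · exact Or.inr (Or.inr (Or.inl ⟨htinj h, hb⟩))
      · exact Or.inr (Or.inl ⟨m, htinj h, hb⟩)
      · exact absurd h (htA n m)
    · rintro (rfl | ⟨m, rfl, rfl⟩ | ⟨rfl, rfl⟩ | hb)
      · exact ⟨fun h => (Nat.succ_ne_self n).symm (htinj h), Or.inl (Or.inr (Or.inr (Or.inl ⟨n, rfl, rfl⟩)))⟩
      · exact ⟨fun h => (Nat.succ_ne_self m) (htinj h), Or.inr (Or.inr (Or.inr (Or.inl ⟨m, rfl, rfl⟩)))⟩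
      · exact ⟨fun h => ht' 0 h.symm, Or.inr (Or.inr (Or.inl ⟨rfl, rfl⟩))⟩
      · exact ⟨fun h => htA n n (h ▸ hb), Or.inl (Or.inr (Or.inr (Or.inr ⟨n, rfl, hb⟩)))⟩
  -- every t n has three distinct neighbours
  have hthree : ∀ n : ℕ, ∃ b c d, G.Adj (t n) b ∧ G.Adj (t n) c ∧ G.Adj (t n) d ∧
      b ≠ c ∧ b ≠ d ∧ c ≠ d := by
    intro n
    obtain ⟨a, ha⟩ := hne n
    have h1 : G.Adj (t n) (t (n+1)) := (N4 n _).2 (Or.inl rfl)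
    have h2 : G.Adj (t n) a := (N4 n _).2 (Or.inr (Or.inr (Or.inr ha)))
    have hba : t (n+1) ≠ a := fun h => htA (n+1) n (by rw [h]; exact ha)
    cases n with
    | zero =>
      exact ⟨t 1, a, t', h1, h2, (N4 0 _).2 (Or.inr (Or.inr (Or.inl ⟨rfl, rfl⟩))), hba,
        fun h => ht' 1 h.symm, fun h => ht'A 0 (by rw [← h]; exact ha)⟩
    | succ m =>
      exact ⟨t (m+2), a, t m, h1, h2, (N4 (m+1) _).2 (Or.inr (Or.inl ⟨m, rfl, rfl⟩)), hba,
        fun h => by have := htinj h; omega, fun h => htA m (m+1) (by rw [← h]; exact ha)⟩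
  -- the characterizing property of t''
  have hP'' : ∃ w, G.Adj t'' w ∧ (∀ b, G.Adj t'' b → b = w) ∧
      ¬ ∃ b c d, G.Adj w b ∧ G.Adj w c ∧ G.Adj w d ∧ b ≠ c ∧ b ≠ d ∧ c ≠ d := by
    refine ⟨t', (N1 t').2 rfl, fun b hb => (N1 b).1 hb, ?_⟩
    rintro ⟨b, c, d, hb, hc, hd, hbc, hbd, hcd⟩
    rcases (N2 b).1 hb with rfl | rfl <;> rcases (N2 c).1 hc with rfl | rfl <;>
      rcases (N2 d).1 hd with rfl | rfl <;>
      first | exact hbc rfl | exact hbd rfl | exact hcd rfl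
  have hPonly : ∀ v, (∃ w, G.Adj v w ∧ (∀ b, G.Adj v b → b = w) ∧
      ¬ ∃ b c d, G.Adj w b ∧ G.Adj w c ∧ G.Adj w d ∧ b ≠ c ∧ b ≠ d ∧ c ≠ d) → v = t'' := by
    rintro v ⟨w, hvw, huniq, h3⟩
    rcases hcover v with ⟨n, hvA⟩ | ⟨n, rfl⟩ | rfl | rfl
    · exfalso
      have hw : w = t n := by rw [← (N3 n v hvA w).1 hvw]
      exact h3 (hw ▸ hthree n)
    · exfalso
      obtain ⟨a, ha⟩ := hne n
      have h1 : t (n+1) = w := huniq _ ((N4 n _).2 (Or.inl rfl))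
      have h2 : a = w := huniq _ ((N4 n _).2 (Or.inr (Or.inr (Or.inr ha))))
      exact htA (n+1) n (h1.trans h2.symm ▸ ha)
    · exfalso
      have h1 : t'' = w := huniq _ ((N2 _).2 (Or.inl rfl))
      have h2 : t 0 = w := huniq _ ((N2 _).2 (Or.inr rfl))
      exact ht'' 0 (h1.trans h2.symm)
    · rfl
  -- every automorphism fixes t''
  have hfix'' : ∀ φ : G ≃g G, φ t'' = t'' := by
    intro φ
    apply hPonly
    obtain ⟨w, h1, h2, h3⟩ := hP''
    refine ⟨φ w, φ.map_adj_iff.2 h1, ?_, ?_⟩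
    · intro b hb
      have hb' : G.Adj (φ t'') (φ (φ.symm b)) := by rwa [φ.apply_symm_apply]
      have hw : φ.symm b = w := h2 _ (φ.map_adj_iff.1 hb')
      rw [← hw, φ.apply_symm_apply]
    · rintro ⟨b, c, d, hb, hc, hd, hbc, hbd, hcd⟩
      refine h3 ⟨φ.symm b, φ.symm c, φ.symm d, ?_, ?_, ?_,
        fun h => hbc (by simpa using congrArg φ h),
        fun h => hbd (by simpa using congrArg φ h),
        fun h => hcd (by simpa using congrArg φ h)⟩
      · have h' : G.Adj (φ w) (φ (φ.symm b)) := by rwa [φ.apply_symm_apply]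
        exact φ.map_adj_iff.1 h'
      · have h' : G.Adj (φ w) (φ (φ.symm c)) := by rwa [φ.apply_symm_apply]
        exact φ.map_adj_iff.1 h'
      · have h' : G.Adj (φ w) (φ (φ.symm d)) := by rwa [φ.apply_symm_apply]
        exact φ.map_adj_iff.1 h'
  -- every automorphism fixes t'
  have hfix' : ∀ φ : G ≃g G, φ t' = t' := by
    intro φ
    have h : G.Adj t'' (φ t') := by
      have := φ.map_adj_iff.2 ((N1 t').2 rfl)
      rwa [hfix'' φ] at this
    exact (N1 _).1 h
  -- every automorphism fixes every t n
  have hfixT : ∀ (φ : G ≃g G) (n : ℕ), φ (t n) = t n := by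
    intro φ
    have h0 : φ (t 0) = t 0 := by
      have h : G.Adj t' (φ (t 0)) := by
        have := φ.map_adj_iff.2 ((N2 (t 0)).2 (Or.inr rfl))
        rwa [hfix' φ] at this
      rcases (N2 _).1 h with h' | h'
      · exfalso
        rw [← hfix'' φ] at h'
        exact ht'' 0 (φ.injective h').symm
      · exact h'
    have hnext : ∀ n : ℕ, φ (t n) = t n → (∀ m, n = m + 1 → φ (t m) = t m) →
        φ (t (n+1)) = t (n+1) := by
      intro n hn hpred
      have h : G.Adj (t n) (φ (t (n+1))) := by
        have := φ.map_adj_iff.2 ((N4 n (t (n+1))).2 (Or.inl rfl))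
        rwa [hn] at this
      rcases (N4 n _).1 h with h' | ⟨m, hm, h'⟩ | ⟨hm, h'⟩ | h'
      · exact h'
      · exfalso
        rw [← hpred m hm] at h'
        have := htinj (φ.injective h')
        omega
      · exfalso
        rw [← hfix' φ] at h'
        exact ht' (n+1) (φ.injective h').symm
      · exfalso
        -- φ (t (n+1)) lies in A n, but it has two distinct neighbours
        have hia := N3 n _ h'
        have ha1 : G.Adj (φ (t (n+1))) (φ (t n)) :=
          (φ.map_adj_iff.2 ((N4 n (t (n+1))).2 (Or.inl rfl))).symm
        have ha2 : G.Adj (φ (t (n+1))) (φ (t (n+2))) :=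
          φ.map_adj_iff.2 ((N4 (n+1) (t (n+2))).2 (Or.inl rfl))
        have e1 : φ (t n) = t n := hn
        have e2 : φ (t (n+2)) = t n := (hia _).1 ha2
        rw [← e1] at e2
        have := htinj (φ.injective e2)
        omega
    have key : ∀ n, φ (t n) = t n ∧ φ (t (n+1)) = t (n+1) := by
      intro n
      induction n with
      | zero => exact ⟨h0, hnext 0 h0 (fun k hk => absurd hk (Nat.succ_ne_zero k).symm)⟩
      | succ m ih =>
        refine ⟨ih.2, hnext (m+1) ih.2 (fun k hk => ?_)⟩
        obtain rfl : k = m := by omega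
        exact ih.1
    exact fun n => (key n).1
  intro p x hx
  have hxiff := N3 p x hx
  ext y
  simp only [Set.mem_setOf_eq]
  constructor
  · rintro ⟨φ, rfl⟩
    have h : G.Adj (t p) (φ x) := by
      have := φ.map_adj_iff.2 ((hxiff (t p)).2 rfl)
      rw [hfixT φ p] at this
      exact this.symm
    rcases (N4 p _).1 h with h' | ⟨m, hm, h'⟩ | ⟨hm, h'⟩ | h'
    · exfalso
      rw [← hfixT φ (p+1)] at h'
      have := φ.injective h'
      exact htA (p+1) p (this ▸ hx)
    · exfalso
      rw [← hfixT φ m] at h'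
      have := φ.injective h'
      exact htA m p (this ▸ hx)
    · exfalso
      rw [← hfix' φ] at h'
      have := φ.injective h'
      exact ht'A p (this ▸ hx)
    · exact h'
  · intro hy
    have hyiff := N3 p y hy
    have htpx : t p ≠ x := fun h => htA p p (h ▸ hx)
    have htpy : t p ≠ y := fun h => htA p p (h ▸ hy)
    -- the swap of x and y is an automorphism
    have key : ∀ a b, G.Adj a b → G.Adj (Equiv.swap x y a) (Equiv.swap x y b) := by
      intro a b hab
      rcases eq_or_ne a x with rfl | hax
      · obtain rfl : b = t p := (hxiff b).1 hab
        rw [Equiv.swap_apply_left, Equiv.swap_apply_of_ne_of_ne htpx htpy]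
        exact (hyiff _).2 rfl
      · rcases eq_or_ne a y with rfl | hay
        · obtain rfl : b = t p := (hyiff b).1 hab
          rw [Equiv.swap_apply_right, Equiv.swap_apply_of_ne_of_ne htpx htpy]
          exact (hxiff _).2 rfl
        · rw [Equiv.swap_apply_of_ne_of_ne hax hay]
          rcases eq_or_ne b x with rfl | hbx
          · obtain rfl : a = t p := (hxiff a).1 hab.symm
            rw [Equiv.swap_apply_left]
            exact ((hyiff _).2 rfl).symm
          · rcases eq_or_ne b y with rfl | hby
            · obtain rfl : a = t p := (hyiff a).1 hab.symm
              rw [Equiv.swap_apply_right]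
              exact ((hxiff _).2 rfl).symm
            · rw [Equiv.swap_apply_of_ne_of_ne hbx hby]
              exact hab
    refine ⟨⟨Equiv.swap x y, ?_⟩, ?_⟩
    · intro a b
      constructor
      · intro h
        have := key _ _ h
        simpa [Equiv.swap_apply_self] using this
      · exact key a b
    · exact Equiv.swap_apply_left x y
end

section
/- In the graph G₂ defined below, the maximum degree of G₂ equals 3, and every automorphism of G₂ fixes every vertex r_n and every vertex t_n. -/
theorem stmt8 {V : Type} (A : ℕ → Set V) (t r : ℕ → V)
    (hdisj : Pairwise (fun m n => Disjoint (A m) (A n)))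
    (hA : ∀ n, ∃ x y : V, x ≠ y ∧ A n = {x, y})
    (htinj : Function.Injective t) (hrinj : Function.Injective r)
    (htr : ∀ m n, t m ≠ r n)
    (htA : ∀ n m, t n ∉ A m) (hrA : ∀ n m, r n ∉ A m)
    (hcover : ∀ v : V, (∃ n, v ∈ A n) ∨ (∃ n, v = t n) ∨ (∃ n, v = r n))
    (G₂ : SimpleGraph V)
    (hG : G₂ = SimpleGraph.fromRel (fun a b =>
      (∃ n, a = r n ∧ b = r (n + 1)) ∨ (∃ n, a = r n ∧ b = t n) ∨
      (∃ n, a = t n ∧ b ∈ A n))) :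
    (∀ v : V, (G₂.neighborSet v).ncard ≤ 3) ∧
    (∃ v : V, (G₂.neighborSet v).ncard = 3) ∧
    (∀ φ : G₂ ≃g G₂, ∀ n : ℕ, φ (r n) = r n ∧ φ (t n) = t n) := by
  choose x y hxy hAxy using hA
  have hrt : ∀ m n, r m ≠ t n := fun m n h => htr n m h.symm
  have hAmem : ∀ {a : V} {m n : ℕ}, a ∈ A m → a ∈ A n → m = n := by
    intro a m n h1 h2
    by_contra hne
    exact Set.disjoint_left.mp (hdisj hne) h1 h2
  have hadj : ∀ a b, G₂.Adj a b ↔ a ≠ b ∧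
      (((∃ n, a = r n ∧ b = r (n + 1)) ∨ (∃ n, a = r n ∧ b = t n) ∨
        (∃ n, a = t n ∧ b ∈ A n)) ∨
       ((∃ n, b = r n ∧ a = r (n + 1)) ∨ (∃ n, b = r n ∧ a = t n) ∨
        (∃ n, b = t n ∧ a ∈ A n))) := by
    intro a b
    rw [hG]
    exact SimpleGraph.fromRel_adj _ a b
  -- neighbor set of r 0
  have hNr0 : G₂.neighborSet (r 0) = {r 1, t 0} := by
    ext v
    simp only [SimpleGraph.mem_neighborSet, hadj, Set.mem_insert_iff, Set.mem_singleton_iff]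
    constructor
    · rintro ⟨hne, (⟨n, h1, h2⟩ | ⟨n, h1, h2⟩ | ⟨n, h1, h2⟩) |
        (⟨n, h1, h2⟩ | ⟨n, h1, h2⟩ | ⟨n, h1, h2⟩)⟩
      · have : (0 : ℕ) = n := hrinj h1
        subst this; exact Or.inl h2
      · have : (0 : ℕ) = n := hrinj h1
        subst this; exact Or.inr h2
      · exact absurd h1 (hrt 0 n)
      · exact absurd (hrinj h2) (by omega)
      · exact absurd h2 (hrt 0 n)
      · exact absurd h2 (hrA 0 n)
    · rintro (rfl | rfl)
      · exact ⟨fun h => by simpa using hrinj h, Or.inl (Or.inl ⟨0, rfl, rfl⟩)⟩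
      · exact ⟨hrt 0 0, Or.inl (Or.inr (Or.inl ⟨0, rfl, rfl⟩))⟩
  -- neighbor set of r (m+1)
  have hNr1 : ∀ m, G₂.neighborSet (r (m + 1)) = {r m, r (m + 2), t (m + 1)} := by
    intro m
    ext v
    simp only [SimpleGraph.mem_neighborSet, hadj, Set.mem_insert_iff, Set.mem_singleton_iff]
    constructor
    · rintro ⟨hne, (⟨n, h1, h2⟩ | ⟨n, h1, h2⟩ | ⟨n, h1, h2⟩) |
        (⟨n, h1, h2⟩ | ⟨n, h1, h2⟩ | ⟨n, h1, h2⟩)⟩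
      · have : m + 1 = n := hrinj h1
        subst this; exact Or.inr (Or.inl h2)
      · have : m + 1 = n := hrinj h1
        subst this; exact Or.inr (Or.inr h2)
      · exact absurd h1 (hrt _ n)
      · have : m + 1 = n + 1 := hrinj h2
        have : m = n := by omega
        subst this; exact Or.inl h1
      · exact absurd h2 (hrt _ n)
      · exact absurd h2 (hrA _ n)
    · rintro (rfl | rfl | rfl)
      · exact ⟨fun h => by have := hrinj h; omega,
          Or.inr (Or.inl ⟨m, rfl, rfl⟩)⟩
      · exact ⟨fun h => by have := hrinj h; omega,
          Or.inl (Or.inl ⟨m + 1, rfl, rfl⟩)⟩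
      · exact ⟨hrt _ _, Or.inl (Or.inr (Or.inl ⟨m + 1, rfl, rfl⟩))⟩
  -- neighbor set of t m
  have hNt : ∀ m, G₂.neighborSet (t m) = insert (r m) (A m) := by
    intro m
    ext v
    simp only [SimpleGraph.mem_neighborSet, hadj, Set.mem_insert_iff]
    constructor
    · rintro ⟨hne, (⟨n, h1, h2⟩ | ⟨n, h1, h2⟩ | ⟨n, h1, h2⟩) |
        (⟨n, h1, h2⟩ | ⟨n, h1, h2⟩ | ⟨n, h1, h2⟩)⟩
      · exact absurd h1.symm (hrt n m)
      · exact absurd h1.symm (hrt n m)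
      · have : m = n := htinj h1
        subst this; exact Or.inr h2
      · exact absurd h2 (htr m (n + 1))
      · have : m = n := htinj h2
        subst this; exact Or.inl h1
      · exact absurd h2 (htA m n)
    · rintro (rfl | hv)
      · exact ⟨(hrt m m).symm, Or.inr (Or.inr (Or.inl ⟨m, rfl, rfl⟩))⟩
      · exact ⟨fun h => htA m m (h ▸ hv), Or.inl (Or.inr (Or.inr ⟨m, rfl, hv⟩))⟩
  -- neighbor set of an element of A m
  have hNa : ∀ m a, a ∈ A m → G₂.neighborSet a = {t m} := by
    intro m a ha
    ext v
    simp only [SimpleGraph.mem_neighborSet, hadj, Set.mem_singleton_iff]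
    constructor
    · rintro ⟨hne, (⟨n, h1, h2⟩ | ⟨n, h1, h2⟩ | ⟨n, h1, h2⟩) |
        (⟨n, h1, h2⟩ | ⟨n, h1, h2⟩ | ⟨n, h1, h2⟩)⟩
      · exact absurd (h1 ▸ ha) (hrA n m)
      · exact absurd (h1 ▸ ha) (hrA n m)
      · exact absurd (h1 ▸ ha) (htA n m)
      · exact absurd (h2 ▸ ha) (hrA (n + 1) m)
      · exact absurd (h2 ▸ ha) (htA n m)
      · have : n = m := hAmem h2 ha
        subst this; exact h1
    · rintro rfl
      exact ⟨fun h => htA m m (h ▸ ha), Or.inr (Or.inr (Or.inr ⟨m, rfl, ha⟩))⟩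
  -- ncards
  have hcard_r0 : (G₂.neighborSet (r 0)).ncard = 2 := by
    rw [hNr0]
    exact Set.ncard_pair (hrt 1 0)
  have hcard_r1 : ∀ m, (G₂.neighborSet (r (m + 1))).ncard = 3 := by
    intro m
    rw [hNr1 m]
    rw [Set.ncard_insert_of_notMem (by
      simp only [Set.mem_insert_iff, Set.mem_singleton_iff]
      push_neg
      exact ⟨fun h => by have := hrinj h; omega, hrt m (m + 1)⟩)]
    rw [Set.ncard_pair (hrt (m + 2) (m + 1))]
  have hcard_t : ∀ m, (G₂.neighborSet (t m)).ncard = 3 := by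
    intro m
    rw [hNt m, hAxy m]
    rw [Set.ncard_insert_of_notMem (by rw [← hAxy m]; exact hrA m m)]
    rw [Set.ncard_pair (hxy m)]
  have hcard_a : ∀ m a, a ∈ A m → (G₂.neighborSet a).ncard = 1 := by
    intro m a ha
    rw [hNa m a ha]
    exact Set.ncard_singleton _
  -- degree preservation
  have himg : ∀ (φ : G₂ ≃g G₂) v, G₂.neighborSet (φ v) = φ '' G₂.neighborSet v := by
    intro φ v
    ext w
    simp only [SimpleGraph.mem_neighborSet, Set.mem_image]
    constructor
    · intro h
      refine ⟨φ.symm w, ?_, φ.apply_symm_apply w⟩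
      have h2 := φ.map_adj_iff (v := v) (w := φ.symm w)
      rw [φ.apply_symm_apply] at h2
      exact h2.mp h
    · rintro ⟨u, hu, rfl⟩
      exact φ.map_adj_iff.mpr hu
  have hdeg : ∀ (φ : G₂ ≃g G₂) v,
      (G₂.neighborSet (φ v)).ncard = (G₂.neighborSet v).ncard := by
    intro φ v
    rw [himg φ v]
    exact Set.ncard_image_of_injective _ φ.injective
  -- t m has a degree-1 neighbor, r k does not
  have hxmem : ∀ m, x m ∈ A m := fun m => by rw [hAxy m]; exact Set.mem_insert _ _
  have hP : ∀ m, ∃ w, G₂.Adj (t m) w ∧ (G₂.neighborSet w).ncard = 1 := by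
    intro m
    refine ⟨x m, ?_, hcard_a m _ (hxmem m)⟩
    have : x m ∈ G₂.neighborSet (t m) := by
      rw [hNt m]; exact Set.mem_insert_iff.mpr (Or.inr (hxmem m))
    exact this
  have hnotP : ∀ k w, G₂.Adj (r k) w → (G₂.neighborSet w).ncard ≠ 1 := by
    intro k w hw
    have hw' : w ∈ G₂.neighborSet (r k) := hw
    match k with
    | 0 =>
      rw [hNr0] at hw'
      rcases hw' with rfl | rfl
      · rw [hcard_r1 0]; omega
      · rw [hcard_t 0]; omega
    | k + 1 =>
      rw [hNr1 k] at hw'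
      rcases hw' with rfl | rfl | rfl
      · match k with
        | 0 => rw [hcard_r0]; omega
        | k + 1 => rw [hcard_r1 k]; omega
      · rw [hcard_r1 (k + 1)]; omega
      · rw [hcard_t (k + 1)]; omega
  have hne_t : ∀ (φ : G₂ ≃g G₂) (k m : ℕ), φ (r k) ≠ t m := by
    intro φ k m h
    obtain ⟨w, hw, hw1⟩ := hP m
    rw [← h] at hw
    have hadj' : G₂.Adj (r k) (φ.symm w) := by
      have h2 := φ.map_adj_iff (v := r k) (w := φ.symm w)
      rw [φ.apply_symm_apply] at h2
      exact h2.mp hw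
    have hcard' : (G₂.neighborSet (φ.symm w)).ncard = 1 := by
      have := hdeg φ (φ.symm w)
      rw [φ.apply_symm_apply] at this
      omega
    exact hnotP k _ hadj' hcard'
  -- unique degree-2 vertex
  have huniq2 : ∀ v, (G₂.neighborSet v).ncard = 2 → v = r 0 := by
    intro v hv
    rcases hcover v with ⟨n, hn⟩ | ⟨n, rfl⟩ | ⟨n, rfl⟩
    · rw [hcard_a n v hn] at hv; omega
    · rw [hcard_t n] at hv; omega
    · match n with
      | 0 => rfl
      | n + 1 => rw [hcard_r1 n] at hv; omega
  -- main induction on r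
  have key : ∀ (φ : G₂ ≃g G₂) (n : ℕ), φ (r n) = r n ∧ φ (r (n + 1)) = r (n + 1) := by
    intro φ n
    induction n with
    | zero =>
      have h0 : φ (r 0) = r 0 := by
        apply huniq2
        rw [hdeg φ (r 0)]
        exact hcard_r0
      refine ⟨h0, ?_⟩
      have hadj01 : G₂.Adj (r 0) (r 1) := by
        have : r 1 ∈ G₂.neighborSet (r 0) := by
          rw [hNr0]; exact Set.mem_insert _ _
        exact this
      have hmem : φ (r 1) ∈ G₂.neighborSet (r 0) := by
        rw [← h0]
        exact φ.map_adj_iff.mpr hadj01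
      rw [hNr0] at hmem
      rcases hmem with h | h
      · exact h
      · exact absurd h (hne_t φ 1 0)
    | succ n ih =>
      obtain ⟨h1, h2⟩ := ih
      refine ⟨h2, ?_⟩
      have hadj12 : G₂.Adj (r (n + 1)) (r (n + 2)) := by
        have : r (n + 2) ∈ G₂.neighborSet (r (n + 1)) := by
          rw [hNr1 n]
          exact Set.mem_insert_iff.mpr (Or.inr (Set.mem_insert _ _))
        exact this
      have hmem : φ (r (n + 2)) ∈ G₂.neighborSet (r (n + 1)) := by
        rw [← h2]
        exact φ.map_adj_iff.mpr hadj12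
      rw [hNr1 n] at hmem
      rcases hmem with h | h | h
      · rw [← h1] at h
        have := hrinj (φ.injective h)
        omega
      · exact h
      · exact absurd h (hne_t φ (n + 2) (n + 1))
  have keyt : ∀ (φ : G₂ ≃g G₂) (n : ℕ), φ (t n) = t n := by
    intro φ n
    have hrn := (key φ n).1
    have hadjt : G₂.Adj (r n) (t n) := by
      exact (hadj _ _).mpr ⟨hrt n n, Or.inl (Or.inr (Or.inl ⟨n, rfl, rfl⟩))⟩
    have hmem : φ (t n) ∈ G₂.neighborSet (r n) := by
      rw [← hrn]
      exact φ.map_adj_iff.mpr hadjt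
    match n with
    | 0 =>
      rw [hNr0] at hmem
      rcases hmem with h | h
      · rw [← (key φ 0).2] at h
        exact absurd (φ.injective h) (hrt 1 0).symm
      · exact h
    | n + 1 =>
      rw [hNr1 n] at hmem
      rcases hmem with h | h | h
      · rw [← (key φ n).1] at h
        exact absurd (φ.injective h) (hrt n (n + 1)).symm
      · rw [← (key φ (n + 1)).2] at h
        exact absurd (φ.injective h) (hrt (n + 2) (n + 1)).symm
      · exact h
  refine ⟨?_, ⟨t 0, hcard_t 0⟩, fun φ n => ⟨(key φ n).1, keyt φ n⟩⟩
  intro v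
  rcases hcover v with ⟨n, hn⟩ | ⟨n, rfl⟩ | ⟨n, rfl⟩
  · rw [hcard_a n v hn]; omega
  · rw [hcard_t n]
  · match n with
    | 0 => rw [hcard_r0]; omega
    | n + 1 => rw [hcard_r1 n]
end

section
/- In the graph G₂ defined below, for every n and every x ∈ A_n, the orbit of x under the automorphism group of G₂ is A_n (that is, both elements of A_n can be exchanged by an automorphism fixing all other vertices, and no automorphism moves x outside A_n). -/
theorem stmt9 {V : Type} (A : ℕ → Set V) (t r : ℕ → V)
    (hdisj : Pairwise (fun m n => Disjoint (A m) (A n)))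
    (hA : ∀ n, ∃ x y : V, x ≠ y ∧ A n = {x, y})
    (htinj : Function.Injective t) (hrinj : Function.Injective r)
    (htr : ∀ m n, t m ≠ r n)
    (htA : ∀ n m, t n ∉ A m) (hrA : ∀ n m, r n ∉ A m)
    (hcover : ∀ v : V, (∃ n, v ∈ A n) ∨ (∃ n, v = t n) ∨ (∃ n, v = r n))
    (G₂ : SimpleGraph V)
    (hG : G₂ = SimpleGraph.fromRel (fun a b =>
      (∃ n, a = r n ∧ b = r (n + 1)) ∨ (∃ n, a = r n ∧ b = t n) ∨
      (∃ n, a = t n ∧ b ∈ A n))) :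
    ∀ (n : ℕ) (x : V), x ∈ A n →
      ({y : V | ∃ φ : G₂ ≃g G₂, φ x = y} = A n ∧
        ∀ y ∈ A n, ∃ φ : G₂ ≃g G₂, φ x = y ∧ ∀ v : V, v ∉ A n → φ v = v) := by
  classical
  have hadj : ∀ a b, G₂.Adj a b ↔ a ≠ b ∧
      (((∃ n, a = r n ∧ b = r (n + 1)) ∨ (∃ n, a = r n ∧ b = t n) ∨
        (∃ n, a = t n ∧ b ∈ A n)) ∨
       ((∃ n, b = r n ∧ a = r (n + 1)) ∨ (∃ n, b = r n ∧ a = t n) ∨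
        (∃ n, b = t n ∧ a ∈ A n))) := by
    subst hG
    intro a b
    exact SimpleGraph.fromRel_adj _ a b
  have hAA : ∀ {a : V} {m n : ℕ}, a ∈ A m → a ∈ A n → m = n := by
    intro a m n h1 h2
    by_contra hne
    exact Set.disjoint_left.mp (hdisj hne) h1 h2
  -- neighborhood characterizations
  have adjA : ∀ n (a b : V), a ∈ A n → (G₂.Adj a b ↔ b = t n) := by
    intro n a b ha
    rw [hadj]
    constructor
    · rintro ⟨hne, ((⟨m, rfl, _⟩ | ⟨m, rfl, _⟩ | ⟨m, rfl, _⟩) |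
        (⟨m, _, rfl⟩ | ⟨m, _, rfl⟩ | ⟨m, rfl, ha'⟩))⟩
      · exact absurd ha (hrA m n)
      · exact absurd ha (hrA m n)
      · exact absurd ha (htA m n)
      · exact absurd ha (hrA (m+1) n)
      · exact absurd ha (htA m n)
      · exact congrArg t (hAA ha' ha)
    · rintro rfl
      exact ⟨fun h => htA n n (h ▸ ha), Or.inr (Or.inr (Or.inr ⟨n, rfl, ha⟩))⟩
  have adjT : ∀ n (b : V), G₂.Adj (t n) b ↔ b = r n ∨ b ∈ A n := by
    intro n b
    rw [hadj]
    constructor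
    · rintro ⟨hne, ((⟨m, hm, _⟩ | ⟨m, hm, _⟩ | ⟨m, hm, hb⟩) |
        (⟨m, rfl, hm⟩ | ⟨m, rfl, hm⟩ | ⟨m, rfl, hb⟩))⟩
      · exact absurd hm (htr n m)
      · exact absurd hm (htr n m)
      · exact Or.inr (htinj hm ▸ hb)
      · exact absurd hm.symm (htr n (m+1)).symm
      · exact Or.inl (congrArg r (htinj hm).symm)
      · exact absurd hb (htA n m)
    · rintro (rfl | hb)
      · exact ⟨htr n n, Or.inr (Or.inr (Or.inl ⟨n, rfl, rfl⟩))⟩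
      · exact ⟨fun h => htA n n (h ▸ hb), Or.inl (Or.inr (Or.inr ⟨n, rfl, hb⟩))⟩
  have adjR : ∀ n (b : V), G₂.Adj (r n) b ↔
      b = r (n+1) ∨ b = t n ∨ ∃ m, n = m + 1 ∧ b = r m := by
    intro n b
    rw [hadj]
    constructor
    · rintro ⟨hne, ((⟨m, hm, rfl⟩ | ⟨m, hm, rfl⟩ | ⟨m, hm, hb⟩) |
        (⟨m, rfl, hm⟩ | ⟨m, rfl, hm⟩ | ⟨m, rfl, hb⟩))⟩
      · exact Or.inl (congrArg r (congrArg Nat.succ (hrinj hm)).symm)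
      · exact Or.inr (Or.inl (congrArg t (hrinj hm).symm))
      · exact absurd hm.symm (htr m n)
      · exact Or.inr (Or.inr ⟨m, (hrinj hm), rfl⟩)
      · exact absurd hm.symm (htr m n)
      · exact absurd hb (hrA n m)
    · rintro (rfl | rfl | ⟨m, rfl, rfl⟩)
      · exact ⟨fun h => absurd (hrinj h) (by omega), Or.inl (Or.inl ⟨n, rfl, rfl⟩)⟩
      · exact ⟨fun h => htr n n h.symm, Or.inl (Or.inr (Or.inl ⟨n, rfl, rfl⟩))⟩
      · exact ⟨fun h => absurd (hrinj h) (by omega), Or.inr (Or.inl ⟨m, rfl, rfl⟩)⟩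
  -- degree-1 vertices are exactly the A-vertices
  have hD1_iff : ∀ v : V, (∃! w, G₂.Adj v w) ↔ ∃ n, v ∈ A n := by
    intro v
    constructor
    · rintro ⟨w, hw, huniq⟩
      rcases hcover v with h | ⟨n, rfl⟩ | ⟨n, rfl⟩
      · exact h
      · obtain ⟨xn, yn, hxy, hAn⟩ := hA n
        have hx : xn ∈ A n := hAn ▸ Or.inl rfl
        have h1 := huniq (r n) ((adjT n (r n)).mpr (Or.inl rfl))
        have h2 := huniq xn ((adjT n xn).mpr (Or.inr hx))
        exact absurd (h1 ▸ h2 ▸ rfl : r n = xn) (fun h => hrA n n (h ▸ hx))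
      · have h1 := huniq (r (n+1)) ((adjR n (r (n+1))).mpr (Or.inl rfl))
        have h2 := huniq (t n) ((adjR n (t n)).mpr (Or.inr (Or.inl rfl)))
        exact absurd (h1 ▸ h2 ▸ rfl : r (n+1) = t n) (fun h => htr n (n+1) h.symm)
    · rintro ⟨n, hv⟩
      exact ⟨t n, (adjA n v (t n) hv).mpr rfl, fun w hw => (adjA n v w hv).mp hw⟩
  -- degree-1 is preserved by automorphisms
  have hD1_iso : ∀ (φ : G₂ ≃g G₂) (v : V), (∃! w, G₂.Adj v w) → ∃! w, G₂.Adj (φ v) w := by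
    rintro φ v ⟨w, hw, huniq⟩
    refine ⟨φ w, φ.map_rel_iff.mpr hw, fun u hu => ?_⟩
    have : G₂.Adj (φ v) (φ (φ.symm u)) := by
      rwa [RelIso.apply_symm_apply]
    have := huniq (φ.symm u) (φ.map_rel_iff.mp this)
    rw [← this, RelIso.apply_symm_apply]
  -- r 0 is the unique degree-2 vertex
  have hD2 : ∀ v : V, (∃ a b : V, a ≠ b ∧ ∀ w, G₂.Adj v w ↔ (w = a ∨ w = b)) ↔ v = r 0 := by
    intro v
    constructor
    · rintro ⟨a, b, hab, h⟩
      rcases hcover v with ⟨n, hv⟩ | ⟨n, rfl⟩ | ⟨n, rfl⟩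
      · have ha : G₂.Adj v a := (h a).mpr (Or.inl rfl)
        have hb : G₂.Adj v b := (h b).mpr (Or.inr rfl)
        exact absurd (((adjA n v a hv).mp ha).trans ((adjA n v b hv).mp hb).symm) hab
      · -- t n has three neighbors
        obtain ⟨xn, yn, hxy, hAn⟩ := hA n
        have hx : xn ∈ A n := hAn ▸ Or.inl rfl
        have hy : yn ∈ A n := hAn ▸ Or.inr rfl
        have h1 := (h (r n)).mp ((adjT n (r n)).mpr (Or.inl rfl))
        have h2 := (h xn).mp ((adjT n xn).mpr (Or.inr hx))
        have h3 := (h yn).mp ((adjT n yn).mpr (Or.inr hy))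
        have d1 : r n ≠ xn := fun h => hrA n n (h ▸ hx)
        have d2 : r n ≠ yn := fun h => hrA n n (h ▸ hy)
        refine absurd rfl (fun (_ : t n = t n) => ?_)
        rcases h1 with e1 | e1 <;> rcases h2 with e2 | e2 <;> rcases h3 with e3 | e3 <;>
            first
            | exact absurd (e1.trans e2.symm) d1
            | exact absurd (e1.trans e3.symm) d2
            | exact absurd (e2.trans e3.symm) hxy
      · cases n with
        | zero => rfl
        | succ m =>
          have h1 := (h (r (m+2))).mp ((adjR (m+1) (r (m+2))).mpr (Or.inl rfl))
          have h2 := (h (t (m+1))).mp ((adjR (m+1) (t (m+1))).mpr (Or.inr (Or.inl rfl)))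
          have h3 := (h (r m)).mp ((adjR (m+1) (r m)).mpr (Or.inr (Or.inr ⟨m, rfl, rfl⟩)))
          have d1 : r (m+2) ≠ t (m+1) := fun h => htr (m+1) (m+2) h.symm
          have d2 : r (m+2) ≠ r m := fun h => absurd (hrinj h) (by omega)
          have d3 : t (m+1) ≠ r m := htr (m+1) m
          refine absurd rfl (fun (_ : r (m+1) = r (m+1)) => ?_)
          rcases h1 with e1 | e1 <;> rcases h2 with e2 | e2 <;> rcases h3 with e3 | e3 <;>
              first
              | exact absurd (e1.trans e2.symm) d1
              | exact absurd (e1.trans e3.symm) d2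
              | exact absurd (e2.trans e3.symm) d3
    · rintro rfl
      refine ⟨r 1, t 0, fun h => htr 0 1 h.symm, fun w => ?_⟩
      rw [adjR]
      constructor
      · rintro (rfl | rfl | ⟨m, hm, rfl⟩)
        · exact Or.inl rfl
        · exact Or.inr rfl
        · omega
      · rintro (rfl | rfl)
        · exact Or.inl rfl
        · exact Or.inr (Or.inl rfl)
  -- "has a degree-1 neighbor" predicate
  have hHD_t : ∀ n, ∃ w, G₂.Adj (t n) w ∧ (∃! u, G₂.Adj w u) := by
    intro n
    obtain ⟨xn, yn, hxy, hAn⟩ := hA n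
    have hx : xn ∈ A n := hAn ▸ Or.inl rfl
    exact ⟨xn, (adjT n xn).mpr (Or.inr hx), (hD1_iff xn).mpr ⟨n, hx⟩⟩
  have hHD_r : ∀ n, ¬ ∃ w, G₂.Adj (r n) w ∧ (∃! u, G₂.Adj w u) := by
    rintro n ⟨w, hw, hd1⟩
    obtain ⟨m, hm⟩ := (hD1_iff w).mp hd1
    rcases (adjR n w).mp hw with rfl | rfl | ⟨k, _, rfl⟩
    · exact hrA (n+1) m hm
    · exact htA n m hm
    · exact hrA k m hm
  have hHD_iso : ∀ (φ : G₂ ≃g G₂) (v : V),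
      (∃ w, G₂.Adj v w ∧ (∃! u, G₂.Adj w u)) →
      ∃ w, G₂.Adj (φ v) w ∧ (∃! u, G₂.Adj w u) := by
    rintro φ v ⟨w, hw, hd1⟩
    exact ⟨φ w, φ.map_rel_iff.mpr hw, hD1_iso φ w hd1⟩
  -- key rigidity lemma
  have key : ∀ (φ : G₂ ≃g G₂) (n : ℕ), φ (r n) = r n ∧ φ (t n) = t n := by
    intro φ
    have hr0 : φ (r 0) = r 0 := by
      refine (hD2 (φ (r 0))).mp ?_
      obtain ⟨a, b, hab, h⟩ := (hD2 (r 0)).mpr rfl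
      refine ⟨φ a, φ b, fun he => hab (φ.injective he), fun w => ?_⟩
      constructor
      · intro hw
        have : G₂.Adj (φ (r 0)) (φ (φ.symm w)) := by rwa [RelIso.apply_symm_apply]
        rcases (h _).mp (φ.map_rel_iff.mp this) with he | he
        · exact Or.inl (by rw [← he, RelIso.apply_symm_apply])
        · exact Or.inr (by rw [← he, RelIso.apply_symm_apply])
      · rintro (rfl | rfl)
        · exact φ.map_rel_iff.mpr ((h a).mpr (Or.inl rfl))
        · exact φ.map_rel_iff.mpr ((h b).mpr (Or.inr rfl))
    have main : ∀ n, φ (r n) = r n ∧ φ (t n) = t n ∧ φ (r (n+1)) = r (n+1) := by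
      intro n
      induction n with
      | zero =>
        refine ⟨hr0, ?_, ?_⟩
        · have h1 : G₂.Adj (r 0) (φ (t 0)) := by
            rw [← hr0]
            exact φ.map_rel_iff.mpr ((adjR 0 (t 0)).mpr (Or.inr (Or.inl rfl)))
          rcases (adjR 0 (φ (t 0))).mp h1 with he | he | ⟨m, hm, _⟩
          · exact absurd (he ▸ hHD_iso φ (t 0) (hHD_t 0)) (hHD_r 1)
          · exact he
          · omega
        · have ht0 : φ (t 0) = t 0 := by
            have h1 : G₂.Adj (r 0) (φ (t 0)) := by
              rw [← hr0]
              exact φ.map_rel_iff.mpr ((adjR 0 (t 0)).mpr (Or.inr (Or.inl rfl)))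
            rcases (adjR 0 (φ (t 0))).mp h1 with he | he | ⟨m, hm, _⟩
            · exact absurd (he ▸ hHD_iso φ (t 0) (hHD_t 0)) (hHD_r 1)
            · exact he
            · omega
          have h1 : G₂.Adj (r 0) (φ (r 1)) := by
            rw [← hr0]
            exact φ.map_rel_iff.mpr ((adjR 0 (r 1)).mpr (Or.inl rfl))
          rcases (adjR 0 (φ (r 1))).mp h1 with he | he | ⟨m, hm, _⟩
          · exact he
          · exact absurd (φ.injective (he.trans ht0.symm)) (fun h => htr 0 1 h.symm)
          · omega
      | succ n ih =>
        obtain ⟨ihr, iht, ihr1⟩ := ih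
        have ht1 : φ (t (n+1)) = t (n+1) := by
          have h1 : G₂.Adj (r (n+1)) (φ (t (n+1))) := by
            rw [← ihr1]
            exact φ.map_rel_iff.mpr ((adjR (n+1) (t (n+1))).mpr (Or.inr (Or.inl rfl)))
          rcases (adjR (n+1) (φ (t (n+1)))).mp h1 with he | he | ⟨m, hm, he⟩
          · exact absurd (he ▸ hHD_iso φ (t (n+1)) (hHD_t (n+1))) (hHD_r (n+2))
          · exact he
          · have he' : φ (t (n+1)) = φ (r n) := by
              rw [he, ihr]; congr 1; omega
            exact absurd (φ.injective he') (htr (n+1) n)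
        refine ⟨ihr1, ht1, ?_⟩
        have h1 : G₂.Adj (r (n+1)) (φ (r (n+2))) := by
          rw [← ihr1]
          exact φ.map_rel_iff.mpr ((adjR (n+1) (r (n+2))).mpr (Or.inl rfl))
        rcases (adjR (n+1) (φ (r (n+2)))).mp h1 with he | he | ⟨m, hm, he⟩
        · exact he
        · exact absurd (φ.injective (he.trans ht1.symm))
            (fun h => htr (n+1) (n+2) h.symm)
        · have he' : φ (r (n+2)) = φ (r n) := by
            rw [he, ihr]; congr 1; omega
          exact absurd (hrinj (φ.injective he')) (by omega)
    exact fun n => ⟨(main n).1, (main n).2.1⟩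
  -- orbit containment: any automorphism keeps x inside A n
  have orbit_sub : ∀ (φ : G₂ ≃g G₂) (n : ℕ) (x : V), x ∈ A n → φ x ∈ A n := by
    intro φ n x hx
    have ht : φ (t n) = t n := (key φ n).2
    have h1 : G₂.Adj (t n) (φ x) := by
      rw [← ht]
      exact φ.map_rel_iff.mpr ((adjT n x).mpr (Or.inr hx))
    rcases (adjT n (φ x)).mp h1 with he | he
    · have hd1 : ∃! w, G₂.Adj (φ x) w := hD1_iso φ x ((hD1_iff x).mpr ⟨n, hx⟩)
      obtain ⟨m, hm⟩ := (hD1_iff (φ x)).mp hd1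
      exact absurd (he ▸ hm) (hrA n m)
    · exact he
  -- swap automorphism
  have swap_iso : ∀ (n : ℕ) (x y : V), x ∈ A n → y ∈ A n → x ≠ y →
      ∃ φ : G₂ ≃g G₂, φ x = y ∧ ∀ v : V, v ∉ A n → φ v = v := by
    intro n x y hx hy hxy
    have hAn : A n = {x, y} := by
      obtain ⟨a, b, hab, he⟩ := hA n
      have hx' : x = a ∨ x = b := by
        have := he ▸ hx
        rwa [Set.mem_insert_iff, Set.mem_singleton_iff] at this
      have hy' : y = a ∨ y = b := by
        have := he ▸ hy
        rwa [Set.mem_insert_iff, Set.mem_singleton_iff] at this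
      rcases hx' with rfl | rfl <;> rcases hy' with rfl | rfl
      · exact absurd rfl hxy
      · exact he
      · rw [he]; exact Set.pair_comm y x
      · exact absurd rfl hxy
    have htx : t n ≠ x := fun h => htA n n (by rw [h]; exact hx)
    have hty : t n ≠ y := fun h => htA n n (by rw [h]; exact hy)
    have hnx : ∀ w, G₂.Adj x w ↔ w = t n := fun w => adjA n x w hx
    have hny : ∀ w, G₂.Adj y w ↔ w = t n := fun w => adjA n y w hy
    have mono : ∀ a b : V, G₂.Adj a b → G₂.Adj (Equiv.swap x y a) (Equiv.swap x y b) := by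
      intro a b hab
      by_cases hax : a = x
      · subst hax
        have hb : b = t n := (hnx b).mp hab
        subst hb
        rw [Equiv.swap_apply_left,
          Equiv.swap_apply_of_ne_of_ne htx hty]
        exact ((hny (t n)).mpr rfl)
      · by_cases hay : a = y
        · subst hay
          have hb : b = t n := (hny b).mp hab
          subst hb
          rw [Equiv.swap_apply_right,
            Equiv.swap_apply_of_ne_of_ne htx hty]
          exact ((hnx (t n)).mpr rfl)
        · rw [Equiv.swap_apply_of_ne_of_ne hax hay]
          by_cases hbx : b = x
          · subst hbx
            rw [Equiv.swap_apply_left]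
            exact ((hny a).mpr ((hnx a).mp hab.symm)).symm
          · by_cases hby : b = y
            · subst hby
              rw [Equiv.swap_apply_right]
              exact ((hnx a).mpr ((hny a).mp hab.symm)).symm
            · rw [Equiv.swap_apply_of_ne_of_ne hbx hby]
              exact hab
    refine ⟨⟨Equiv.swap x y, ?_⟩, Equiv.swap_apply_left x y, fun v hv => ?_⟩
    · intro a b
      constructor
      · intro h
        have := mono _ _ h
        rwa [Equiv.swap_apply_self, Equiv.swap_apply_self] at this
      · exact mono a b
    · exact Equiv.swap_apply_of_ne_of_ne (fun h => hv (h ▸ hx)) (fun h => hv (h ▸ hy))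
  intro n x hx
  have part2 : ∀ y ∈ A n, ∃ φ : G₂ ≃g G₂, φ x = y ∧ ∀ v : V, v ∉ A n → φ v = v := by
    intro y hy
    by_cases hxy : x = y
    · subst hxy
      exact ⟨RelIso.refl _, rfl, fun v _ => rfl⟩
    · exact swap_iso n x y hx hy hxy
  refine ⟨?_, part2⟩
  ext y
  simp only [Set.mem_setOf_eq]
  constructor
  · rintro ⟨φ, rfl⟩
    exact orbit_sub φ n x hx
  · intro hy
    obtain ⟨φ, hφ, -⟩ := part2 y hy
    exact ⟨φ, hφ⟩
end

section
/- The graph H defined below is bipartite (2-colorable), and its only automorphism is the identity; hence its distinguishing chromatic number equals 2. -/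
def HRel : (Fin 6 ⊕ ℕ) → (Fin 6 ⊕ ℕ) → Prop
  | Sum.inl a, Sum.inl b =>
      (a = 0 ∧ (b = 1 ∨ b = 2 ∨ b = 3 ∨ b = 4)) ∨
      (a = 5 ∧ (b = 1 ∨ b = 2 ∨ b = 3 ∨ b = 4))
  | Sum.inl a, Sum.inr i =>
      (a = 5 ∧ i = 0) ∨ (a = 2 ∧ i = 1) ∨ (a = 4 ∧ i = 2) ∨ (a = 1 ∧ i = 4)
  | Sum.inr i, Sum.inr j => (i = 2 ∧ j = 3) ∨ (4 ≤ i ∧ j = i + 1)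
  | _, _ => False

def Hgraph : SimpleGraph (Fin 6 ⊕ ℕ) := SimpleGraph.fromRel HRel

def nbrs : Fin 6 ⊕ ℕ → Finset (Fin 6 ⊕ ℕ)
  | .inl a =>
    if a = 0 then {.inl 1, .inl 2, .inl 3, .inl 4}
    else if a = 1 then {.inl 0, .inl 5, .inr 4}
    else if a = 2 then {.inl 0, .inl 5, .inr 1}
    else if a = 3 then {.inl 0, .inl 5}
    else if a = 4 then {.inl 0, .inl 5, .inr 2}
    else {.inl 1, .inl 2, .inl 3, .inl 4, .inr 0}
  | .inr 0 => {.inl 5}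
  | .inr 1 => {.inl 2}
  | .inr 2 => {.inl 4, .inr 3}
  | .inr 3 => {.inr 2}
  | .inr 4 => {.inl 1, .inr 5}
  | .inr (i+5) => {.inr (i+4), .inr (i+6)}

lemma adj_iff (a b : Fin 6 ⊕ ℕ) : Hgraph.Adj a b ↔ b ∈ nbrs a := by
  rw [Hgraph, SimpleGraph.fromRel_adj]
  rcases a with a | i <;> rcases b with b | j
  · fin_cases a <;> fin_cases b <;> simp [HRel, nbrs]
  · fin_cases a <;> simp [HRel, nbrs] <;> omega
  · rcases i with _|_|_|_|_|i <;> fin_cases b <;> simp [HRel, nbrs] <;> omega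
  · rcases i with _|_|_|_|_|i <;> rcases j with _|_|_|_|_|j <;>
      simp [HRel, nbrs] <;> omega

lemma mem_nbrs_map (φ : Hgraph ≃g Hgraph) {a b : Fin 6 ⊕ ℕ} :
    φ b ∈ nbrs (φ a) ↔ b ∈ nbrs a := by
  rw [← adj_iff, ← adj_iff]; exact φ.map_adj_iff

lemma nbrs_map_eq (φ : Hgraph ≃g Hgraph) (a : Fin 6 ⊕ ℕ) :
    nbrs (φ a) = (nbrs a).image φ := by
  ext b
  constructor
  · intro hb
    obtain ⟨c, rfl⟩ := φ.toEquiv.surjective b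
    exact Finset.mem_image_of_mem _ ((mem_nbrs_map φ).mp hb)
  · intro hb
    obtain ⟨c, hc, rfl⟩ := Finset.mem_image.mp hb
    exact (mem_nbrs_map φ).mpr hc

lemma deg_map (φ : Hgraph ≃g Hgraph) (a : Fin 6 ⊕ ℕ) :
    (nbrs (φ a)).card = (nbrs a).card := by
  rw [nbrs_map_eq]; exact Finset.card_image_of_injective _ (RelIso.injective φ)

lemma card_tail (i : ℕ) : (nbrs (Sum.inr (i+5))).card = 2 := by
  show ({Sum.inr (i+4), Sum.inr (i+6)} : Finset (Fin 6 ⊕ ℕ)).card = 2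
  rw [Finset.card_pair]
  simp only [ne_eq, Sum.inr.injEq]; omega

lemma eq_v5 {w : Fin 6 ⊕ ℕ} (h : (nbrs w).card = 5) : w = Sum.inl 5 := by
  rcases w with a | i
  · fin_cases a <;> revert h <;> decide
  · rcases i with _|_|_|_|_|i
    · revert h; decide
    · revert h; decide
    · revert h; decide
    · revert h; decide
    · revert h; decide
    · rw [card_tail] at h; omega

lemma eq_v0 {w : Fin 6 ⊕ ℕ} (h : (nbrs w).card = 4) : w = Sum.inl 0 := by
  rcases w with a | i
  · fin_cases a <;> revert h <;> decide
  · rcases i with _|_|_|_|_|i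
    · revert h; decide
    · revert h; decide
    · revert h; decide
    · revert h; decide
    · revert h; decide
    · rw [card_tail] at h; omega

lemma rigid (φ : Hgraph ≃g Hgraph) : ∀ v, φ v = v := by
  have inj := RelIso.injective φ
  have key : ∀ x y : Fin 6 ⊕ ℕ, φ x = y → ∀ b, b ∈ nbrs x → φ b ∈ nbrs y := by
    intro x y hxy b hb; rw [← hxy]; exact (mem_nbrs_map φ).mpr hb
  have h5 : φ (Sum.inl 5) = Sum.inl 5 :=
    eq_v5 ((deg_map φ _).trans (by decide))
  have h0 : φ (Sum.inl 0) = Sum.inl 0 :=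
    eq_v0 ((deg_map φ _).trans (by decide))
  have hs0 : φ (Sum.inr 0) = Sum.inr 0 := by
    have hm := key _ _ h5 (Sum.inr 0) (by decide)
    simp [nbrs] at hm
    rcases hm with h|h|h|h|h <;>
      first
        | exact h
        | (have hd := deg_map φ (Sum.inr 0); rw [h] at hd; exact absurd hd (by decide))
  have h3 : φ (Sum.inl 3) = Sum.inl 3 := by
    have hm := key _ _ h5 (Sum.inl 3) (by decide)
    simp [nbrs] at hm
    rcases hm with h|h|h|h|h <;>
      first
        | exact h
        | (have hd := deg_map φ (Sum.inl 3); rw [h] at hd; exact absurd hd (by decide))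
  have h2 : φ (Sum.inl 2) = Sum.inl 2 := by
    have hm := key _ _ h5 (Sum.inl 2) (by decide)
    simp [nbrs] at hm
    rcases hm with h|h|h|h|h
    · exfalso
      have hm' := key _ _ h (Sum.inr 1) (by decide)
      simp [nbrs] at hm'
      rcases hm' with h'|h'|h' <;>
        (have hd := deg_map φ (Sum.inr 1); rw [h'] at hd; exact absurd hd (by decide))
    · exact h
    · have hd := deg_map φ (Sum.inl 2); rw [h] at hd; exact absurd hd (by decide)
    · exfalso
      have hm' := key _ _ h (Sum.inr 1) (by decide)
      simp [nbrs] at hm'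
      rcases hm' with h'|h'|h' <;>
        (have hd := deg_map φ (Sum.inr 1); rw [h'] at hd; exact absurd hd (by decide))
    · have hd := deg_map φ (Sum.inl 2); rw [h] at hd; exact absurd hd (by decide)
  have hs1 : φ (Sum.inr 1) = Sum.inr 1 := by
    have hm := key _ _ h2 (Sum.inr 1) (by decide)
    simp [nbrs] at hm
    rcases hm with h|h|h <;>
      first
        | exact h
        | (have hd := deg_map φ (Sum.inr 1); rw [h] at hd; exact absurd hd (by decide))
  have h4 : φ (Sum.inl 4) = Sum.inl 4 := by
    have hm := key _ _ h5 (Sum.inl 4) (by decide)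
    simp [nbrs] at hm
    rcases hm with h|h|h|h|h
    · exfalso
      have hm' := key _ _ h (Sum.inr 2) (by decide)
      simp [nbrs] at hm'
      rcases hm' with h'|h'|h'
      · have hd := deg_map φ (Sum.inr 2); rw [h'] at hd; exact absurd hd (by decide)
      · have hd := deg_map φ (Sum.inr 2); rw [h'] at hd; exact absurd hd (by decide)
      · have hm'' := key _ _ h' (Sum.inr 3) (by decide)
        simp [nbrs] at hm''
        rcases hm'' with h''|h'' <;>
          (have hd := deg_map φ (Sum.inr 3); rw [h''] at hd; exact absurd hd (by decide))
    · exact absurd (inj (h.trans h2.symm)) (by decide)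
    · have hd := deg_map φ (Sum.inl 4); rw [h] at hd; exact absurd hd (by decide)
    · exact h
    · have hd := deg_map φ (Sum.inl 4); rw [h] at hd; exact absurd hd (by decide)
  have h1 : φ (Sum.inl 1) = Sum.inl 1 := by
    have hm := key _ _ h5 (Sum.inl 1) (by decide)
    simp [nbrs] at hm
    rcases hm with h|h|h|h|h
    · exact h
    · exact absurd (inj (h.trans h2.symm)) (by decide)
    · have hd := deg_map φ (Sum.inl 1); rw [h] at hd; exact absurd hd (by decide)
    · exact absurd (inj (h.trans h4.symm)) (by decide)
    · have hd := deg_map φ (Sum.inl 1); rw [h] at hd; exact absurd hd (by decide)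
  have hs2 : φ (Sum.inr 2) = Sum.inr 2 := by
    have hm := key _ _ h4 (Sum.inr 2) (by decide)
    simp [nbrs] at hm
    rcases hm with h|h|h <;>
      first
        | exact h
        | (have hd := deg_map φ (Sum.inr 2); rw [h] at hd; exact absurd hd (by decide))
  have hs3 : φ (Sum.inr 3) = Sum.inr 3 := by
    have hm := key _ _ hs2 (Sum.inr 3) (by decide)
    simp [nbrs] at hm
    rcases hm with h|h
    · exact absurd (inj (h.trans h4.symm)) (by decide)
    · exact h
  have hs4 : φ (Sum.inr 4) = Sum.inr 4 := by
    have hm := key _ _ h1 (Sum.inr 4) (by decide)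
    simp [nbrs] at hm
    rcases hm with h|h|h <;>
      first
        | exact h
        | (have hd := deg_map φ (Sum.inr 4); rw [h] at hd; exact absurd hd (by decide))
  have tail : ∀ i, φ (Sum.inr (3+i)) = Sum.inr (3+i) ∧ φ (Sum.inr (4+i)) = Sum.inr (4+i) := by
    intro i
    induction i with
    | zero => exact ⟨hs3, hs4⟩
    | succ k ih =>
      refine ⟨by rw [show 3+(k+1) = 4+k from by omega]; exact ih.2, ?_⟩
      have hadj : Hgraph.Adj (Sum.inr (4+k)) (Sum.inr (4+(k+1))) := by
        rw [Hgraph, SimpleGraph.fromRel_adj]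
        refine ⟨by simp only [ne_eq, Sum.inr.injEq]; omega,
          Or.inl (Or.inr ⟨by omega, by omega⟩)⟩
      have hm := key _ _ ih.2 (Sum.inr (4+(k+1))) ((adj_iff _ _).mp hadj)
      rcases k with _|k
      · simp [nbrs] at hm
        rcases hm with h|h
        · exact absurd (inj (h.trans h1.symm)) (by decide)
        · exact h.trans (congrArg Sum.inr (by omega))
      · rw [show (4+(k+1) : ℕ) = k+5 from by omega] at hm
        simp [nbrs] at hm
        rcases hm with h|h
        · have hx := ih.1
          rw [show (3+(k+1) : ℕ) = k+4 from by omega] at hx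
          exact absurd (inj (h.trans hx.symm))
            (by simp only [ne_eq, Sum.inr.injEq]; omega)
        · exact h.trans (congrArg Sum.inr (by omega))
  intro v
  rcases v with a | i
  · fin_cases a
    · exact h0
    · exact h1
    · exact h2
    · exact h3
    · exact h4
    · exact h5
  · rcases i with _|_|_|i
    · exact hs0
    · exact hs1
    · exact hs2
    · have := (tail i).1
      rw [show (3+i : ℕ) = i+1+1+1 from by omega] at this
      exact this

def col : Fin 6 ⊕ ℕ → Fin 2
  | .inl a => if a = 0 ∨ a = 5 then 0 else 1
  | .inr 0 => 1
  | .inr 1 => 0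
  | .inr (i+2) => if i % 2 = 0 then 0 else 1

lemma hrel_col : ∀ a b, HRel a b → col a ≠ col b := by
  intro a b h
  rcases a with a | i <;> rcases b with b | j
  · simp only [HRel] at h
    rcases h with ⟨rfl, hb⟩ | ⟨rfl, hb⟩ <;> rcases hb with rfl|rfl|rfl|rfl <;> decide
  · simp only [HRel] at h
    rcases h with ⟨rfl, rfl⟩ | ⟨rfl, rfl⟩ | ⟨rfl, rfl⟩ | ⟨rfl, rfl⟩ <;> decide
  · simp only [HRel] at h
  · simp only [HRel] at h
    rcases h with ⟨rfl, rfl⟩ | ⟨h4, rfl⟩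
    · decide
    · obtain ⟨k, rfl⟩ : ∃ k, i = k + 4 := ⟨i - 4, by omega⟩
      show col (Sum.inr ((k+2)+2)) ≠ col (Sum.inr ((k+3)+2))
      simp only [col]
      split_ifs <;> first | omega | decide
  
lemma col_proper : ∀ a b, Hgraph.Adj a b → col a ≠ col b := by
  intro a b h
  rw [Hgraph, SimpleGraph.fromRel_adj] at h
  rcases h.2 with h' | h'
  · exact hrel_col a b h'
  · exact (hrel_col b a h').symm

theorem stmt10 :
    (∃ f : (Fin 6 ⊕ ℕ) → Fin 2, ∀ a b, Hgraph.Adj a b → f a ≠ f b) ∧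
    (∀ φ : Hgraph ≃g Hgraph, ∀ v, φ v = v) ∧
    (∃ f : (Fin 6 ⊕ ℕ) → Fin 2, (∀ a b, Hgraph.Adj a b → f a ≠ f b) ∧
      ∀ φ : Hgraph ≃g Hgraph, (∀ v, f (φ v) = f v) → ∀ v, φ v = v) ∧
    (¬ ∃ f : (Fin 6 ⊕ ℕ) → Fin 1, ∀ a b, Hgraph.Adj a b → f a ≠ f b) := by
  refine ⟨⟨col, col_proper⟩, rigid, ⟨col, col_proper, fun φ _ => rigid φ⟩, ?_⟩
  rintro ⟨f, hf⟩
  have e01 : Hgraph.Adj (Sum.inl 0) (Sum.inl 1) := (adj_iff _ _).mpr (by decide)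
  exact hf _ _ e01 (Subsingleton.elim _ _)
end

section
/- In the graph G₁ defined below, every automorphism fixes each vertex t_n, and for every n and x ∈ A_n the orbit of x under Aut(G₁) equals A_n. -/
lemma swapIso' {V : Type} (G : SimpleGraph V) (x y : V) [DecidableEq V]
    (h : ∀ z, z ≠ x → z ≠ y → (G.Adj x z ↔ G.Adj y z)) :
    ∃ φ : G ≃g G, φ x = y := by
  have key : ∀ a b, G.Adj a b → G.Adj (Equiv.swap x y a) (Equiv.swap x y b) := by
    intro a b hab
    simp only [Equiv.swap_apply_def]
    split_ifs with h1 h2 h3 h4 h5 h6 h7 h8 <;> subst_vars <;>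
      first
      | exact hab
      | exact hab.symm
      | (exact absurd hab G.irrefl)
      | (exact ((h _ (by tauto) (by tauto)).mp hab))
      | (exact ((h _ (by tauto) (by tauto)).mpr hab))
      | (exact ((h _ (by tauto) (by tauto)).mp hab.symm).symm)
      | (exact ((h _ (by tauto) (by tauto)).mpr hab.symm).symm)
  refine ⟨⟨Equiv.swap x y, ?_⟩, Equiv.swap_apply_left x y⟩
  intro a b
  constructor
  · intro hab
    have := key _ _ hab
    simpa using this
  · exact key a b

theorem stmt17 {V : Type} (A : ℕ → Set V) (t : ℕ → V)
    (hdisj : Pairwise (fun m n => Disjoint (A m) (A n)))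
    (hfin : ∀ n, (A n).Finite) (hne : ∀ n, (A n).Nonempty)
    (htinj : Function.Injective t) (htA : ∀ n m, t n ∉ A m)
    (hcover : ∀ v : V, (∃ n, v ∈ A n) ∨ (∃ n, v = t n))
    (G₁ : SimpleGraph V)
    (hG : G₁ = SimpleGraph.fromRel (fun a b =>
      (∃ n, a = t n ∧ b = t (n + 1)) ∨ (∃ n, a = t n ∧ b ∈ A n) ∨
      (∃ n, a ∈ A n ∧ b ∈ A n ∧ a ≠ b))) :
    (∀ φ : G₁ ≃g G₁, ∀ n : ℕ, φ (t n) = t n) ∧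
    (∀ (n : ℕ) (x : V), x ∈ A n →
      {y : V | ∃ φ : G₁ ≃g G₁, φ x = y} = A n) := by
  classical
  subst hG
  -- membership in two A's forces equal index
  have hmem : ∀ {x : V} {m n : ℕ}, x ∈ A m → x ∈ A n → m = n := by
    intro x m n hm hn
    by_contra h
    exact Set.disjoint_left.mp (hdisj h) hm hn
  have ne_tA : ∀ {n m : ℕ} {x : V}, x ∈ A m → x ≠ t n := by
    intro n m x hx he; exact htA n m (he ▸ hx)
  -- adjacency characterization for A-vertices
  have charA : ∀ {n : ℕ} {x : V}, x ∈ A n → ∀ z,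
      (SimpleGraph.fromRel (fun a b =>
      (∃ n, a = t n ∧ b = t (n + 1)) ∨ (∃ n, a = t n ∧ b ∈ A n) ∨
      (∃ n, a ∈ A n ∧ b ∈ A n ∧ a ≠ b))).Adj x z ↔ (z = t n ∨ (z ∈ A n ∧ z ≠ x)) := by
    intro n x hx z
    rw [SimpleGraph.fromRel_adj]
    constructor
    · rintro ⟨hne, (⟨k, hk, -⟩ | ⟨k, hk, -⟩ | ⟨k, hk1, hk2, -⟩) |
        (⟨k, hk, hk'⟩ | ⟨k, hk, hk'⟩ | ⟨k, hk1, hk2, -⟩)⟩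
      · exact absurd (hk ▸ hx) (htA k n)
      · exact absurd (hk ▸ hx) (htA k n)
      · exact Or.inr ⟨hmem hk1 hx ▸ hk2, Ne.symm hne⟩
      · exact absurd (hk' ▸ hx) (htA (k+1) n)
      · exact Or.inl (hmem hk' hx ▸ hk)
      · exact Or.inr ⟨hmem hk2 hx ▸ hk1, Ne.symm hne⟩
    · rintro (rfl | ⟨hz, hzx⟩)
      · exact ⟨ne_tA hx, Or.inr (Or.inr (Or.inl ⟨n, rfl, hx⟩))⟩
      · exact ⟨Ne.symm hzx, Or.inl (Or.inr (Or.inr ⟨n, hx, hz, Ne.symm hzx⟩))⟩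
  -- adjacency characterization for t-vertices
  have chart : ∀ (m : ℕ) (z : V),
      (SimpleGraph.fromRel (fun a b =>
      (∃ n, a = t n ∧ b = t (n + 1)) ∨ (∃ n, a = t n ∧ b ∈ A n) ∨
      (∃ n, a ∈ A n ∧ b ∈ A n ∧ a ≠ b))).Adj (t m) z ↔
      (z = t (m+1) ∨ (∃ k, m = k + 1 ∧ z = t k) ∨ z ∈ A m) := by
    intro m z
    rw [SimpleGraph.fromRel_adj]
    constructor
    · rintro ⟨hne, (⟨k, hk, hk'⟩ | ⟨k, hk, hk'⟩ | ⟨k, hk1, -, -⟩) |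
        (⟨k, hk, hk'⟩ | ⟨k, hk, hk'⟩ | ⟨k, -, hk2, -⟩)⟩
      · exact Or.inl (htinj hk ▸ hk')
      · exact Or.inr (Or.inr (htinj hk ▸ hk'))
      · exact absurd hk1 (htA m k)
      · exact Or.inr (Or.inl ⟨k, htinj hk', hk⟩)
      · exact absurd hk' (htA m k)
      · exact absurd hk2 (htA m k)
    · rintro (rfl | ⟨k, rfl, rfl⟩ | hz)
      · exact ⟨fun h => by simpa using htinj h, Or.inl (Or.inl ⟨m, rfl, rfl⟩)⟩
      · exact ⟨fun h => by simpa using htinj h, Or.inr (Or.inl ⟨k, rfl, rfl⟩)⟩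
      · exact ⟨fun h => htA m m (h ▸ hz), Or.inl (Or.inr (Or.inl ⟨m, rfl, hz⟩))⟩
  set G : SimpleGraph V := SimpleGraph.fromRel (fun a b =>
      (∃ n, a = t n ∧ b = t (n + 1)) ∨ (∃ n, a = t n ∧ b ∈ A n) ∨
      (∃ n, a ∈ A n ∧ b ∈ A n ∧ a ≠ b)) with hGdef
  -- clique-neighborhood predicate
  set P : V → Prop := fun v => ∀ a b, G.Adj v a → G.Adj v b → a ≠ b → G.Adj a b with hP
  have PA : ∀ {n : ℕ} {x : V}, x ∈ A n → P x := by
    intro n x hx a b ha hb hab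
    rcases (charA hx a).mp ha with rfl | ⟨ha1, -⟩
    · rcases (charA hx b).mp hb with rfl | ⟨hb1, -⟩
      · exact absurd rfl hab
      · exact (chart n b).mpr (Or.inr (Or.inr hb1))
    · rcases (charA hx b).mp hb with rfl | ⟨hb1, -⟩
      · exact ((chart n a).mpr (Or.inr (Or.inr ha1))).symm
      · exact (charA ha1 b).mpr (Or.inr ⟨hb1, Ne.symm hab⟩)
  have Pt : ∀ m : ℕ, ¬ P (t m) := by
    intro m hPm
    cases m with
    | zero =>
      obtain ⟨a, ha⟩ := hne 0
      have h1 : G.Adj (t 0) (t 1) := (chart 0 (t 1)).mpr (Or.inl rfl)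
      have h2 : G.Adj (t 0) a := (chart 0 a).mpr (Or.inr (Or.inr ha))
      have h3 : (t 1 : V) ≠ a := fun h => htA 1 0 (h ▸ ha)
      have := hPm _ _ h1 h2 h3
      rcases (chart 1 a).mp this with h | ⟨k, hk, h⟩ | h
      · exact htA 2 0 (h ▸ ha)
      · exact htA k 0 (h ▸ ha)
      · exact absurd (hmem ha h) (by norm_num)
    | succ k =>
      have h1 : G.Adj (t (k+1)) (t (k+2)) := (chart (k+1) _).mpr (Or.inl rfl)
      have h2 : G.Adj (t (k+1)) (t k) := (chart (k+1) _).mpr (Or.inr (Or.inl ⟨k, rfl, rfl⟩))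
      have h3 : t (k+2) ≠ t k := fun h => by simpa using htinj h
      have := hPm _ _ h1 h2 h3
      rcases (chart (k+2) (t k)).mp this with h | ⟨j, hj, h⟩ | h
      · have := htinj h; omega
      · have := htinj h; omega
      · exact htA k (k+2) h
  -- P is preserved by automorphisms
  have Pinv : ∀ (φ : G ≃g G) (v : V), P v → P (φ v) := by
    intro φ v hv a b ha hb hab
    have ha' : G.Adj (φ v) (φ (φ.symm a)) := by simpa using ha
    have hb' : G.Adj (φ v) (φ (φ.symm b)) := by simpa using hb
    have h1 := φ.map_adj_iff.mp ha'
    have h2 := φ.map_adj_iff.mp hb'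
    have hne' : φ.symm a ≠ φ.symm b := fun h => hab (by
      have := congrArg φ h; simpa using this)
    have := hv _ _ h1 h2 hne'
    have := φ.map_adj_iff.mpr this
    simpa using this
  -- automorphisms map t-vertices to t-vertices
  have tmap : ∀ (φ : G ≃g G) (m : ℕ), ∃ k, φ (t m) = t k := by
    intro φ m
    rcases hcover (φ (t m)) with ⟨k, hk⟩ | ⟨k, hk⟩
    · exfalso
      have := Pinv φ.symm _ (PA hk)
      rw [show φ.symm (φ (t m)) = t m by simp] at this
      exact Pt m this
    · exact ⟨k, hk⟩
  -- automorphisms map A-vertices to A-vertices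
  have Amap : ∀ (φ : G ≃g G) {n : ℕ} {x : V}, x ∈ A n → ∃ m, φ x ∈ A m := by
    intro φ n x hx
    rcases hcover (φ x) with ⟨m, hm⟩ | ⟨k, hk⟩
    · exact ⟨m, hm⟩
    · exact absurd (hk ▸ Pinv φ x (PA hx)) (Pt k)
  -- neighbors of t 0 among t-vertices: only t 1
  have tadj0 : ∀ (i : ℕ), G.Adj (t 0) (t i) → i = 1 := by
    intro i h
    rcases (chart 0 (t i)).mp h with h | ⟨k, hk, h⟩ | h
    · exact htinj h
    · omega
    · exact absurd h (htA i 0)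
  -- Part 1
  have part1 : ∀ (φ : G ≃g G) (n : ℕ), φ (t n) = t n := by
    intro φ n
    induction n using Nat.strong_induction_on with
    | _ n ih =>
      obtain ⟨k, hk⟩ := tmap φ n
      match n with
      | 0 =>
        rw [hk]
        match k with
        | 0 => rfl
        | (j+1) =>
          exfalso
          -- t j and t (j+2) are both neighbors of φ (t 0); their preimages are t-neighbors of t 0
          obtain ⟨i₁, hi₁⟩ := tmap φ.symm j
          obtain ⟨i₂, hi₂⟩ := tmap φ.symm (j+2)
          have a1 : G.Adj (t (j+1)) (t j) := (chart (j+1) _).mpr (Or.inr (Or.inl ⟨j, rfl, rfl⟩))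
          have a2 : G.Adj (t (j+1)) (t (j+2)) := (chart (j+1) _).mpr (Or.inl rfl)
          have e1 : φ (t i₁) = t j := by rw [← hi₁]; simp
          have e2 : φ (t i₂) = t (j+2) := by rw [← hi₂]; simp
          have b1 : G.Adj (t 0) (t i₁) := φ.map_adj_iff.mp (by rw [hk, e1]; exact a1)
          have b2 : G.Adj (t 0) (t i₂) := φ.map_adj_iff.mp (by rw [hk, e2]; exact a2)
          have hi1 : i₁ = 1 := tadj0 _ b1
          have hi2 : i₂ = 1 := tadj0 _ b2
          rw [hi1] at e1
          rw [hi2] at e2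
          have : t j = t (j+2) := by rw [← e1, ← e2]
          have := htinj this; omega
      | (m+1) =>
        have ihm : φ (t m) = t m := ih m (by omega)
        have a1 : G.Adj (t (m+1)) (t m) := (chart (m+1) _).mpr (Or.inr (Or.inl ⟨m, rfl, rfl⟩))
        have b1 : G.Adj (t k) (t m) := by rw [← hk, ← ihm]; exact φ.map_adj_iff.mpr a1
        rcases (chart k (t m)).mp b1 with h | ⟨j, hj, h⟩ | h
        · -- m = k + 1, i.e. k = m - 1
          have hmk : m = k + 1 := htinj h
          exfalso
          have hφk : φ (t k) = t k := ih k (by omega)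
          have heq : t (m+1) = t k := φ.injective (by rw [hk, hφk])
          have := htinj heq; omega
        · have hjm := htinj h
          have : k = m + 1 := by omega
          rw [hk, this]
        · exact absurd h (htA m k)
  refine ⟨part1, ?_⟩
  intro n x hx
  ext y
  simp only [Set.mem_setOf_eq]
  constructor
  · rintro ⟨φ, rfl⟩
    obtain ⟨m, hm⟩ := Amap φ hx
    have adj : G.Adj (t n) x := (chart n x).mpr (Or.inr (Or.inr hx))
    have adj' : G.Adj (t n) (φ x) := by
      have := φ.map_adj_iff.mpr adj
      rwa [part1 φ n] at this
    rcases (chart n (φ x)).mp adj' with h | ⟨k, hk, h⟩ | h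
    · exact absurd (h ▸ hm) (htA (n+1) m)
    · exact absurd (h ▸ hm) (htA k m)
    · exact h
  · intro hy
    have hsw : ∀ z, z ≠ x → z ≠ y → (G.Adj x z ↔ G.Adj y z) := by
      intro z hzx hzy
      rw [charA hx z, charA hy z]
      constructor
      · rintro (rfl | ⟨h, -⟩)
        · exact Or.inl rfl
        · exact Or.inr ⟨h, hzy⟩
      · rintro (rfl | ⟨h, -⟩)
        · exact Or.inl rfl
        · exact Or.inr ⟨h, hzx⟩
    obtain ⟨φ, hφ⟩ := swapIso' G x y hsw
    exact ⟨φ, hφ⟩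
end
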